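/- For dyadic intervals I strictly contained in J and 0 < α < 1, the commutator satisfies [M_{h_I}, I_α] h_J = c_α h_J(I) (|J|^{1-α} - |I|^{1-α}) h_I, where h_J(I) is the constant value of h_J on I and c_α = ∑_{n=1}^∞ 2^{-n(1-α)}. -/

import Mathlib

open MeasureTheory Set ENNReal

noncomputable section

/-- The dyadic interval `[j 2^k, (j+1) 2^k)`. -/
def dyadicI (k j : ℤ) : Set ℝ := Set.Ico ((j : ℝ) * 2 ^ k) (((j : ℝ) + 1) * 2 ^ k)

/-- The Haar function adapted to the dyadic interval `[j 2^k, (j+1) 2^k)`: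
`h_I = |I|^{-1/2} (-1_{I_-} + 1_{I_+})`. -/
def haarFn (k j : ℤ) : ℝ → ℝ := fun x =>
  ((2 : ℝ) ^ k) ^ (-(1 : ℝ) / 2) *
    (Set.indicator (dyadicI (k - 1) (2 * j + 1)) 1 x -
      Set.indicator (dyadicI (k - 1) (2 * j)) 1 x)

/-- The dyadic Riesz potential `I_α f = ∑_{K ∈ D} |K|^{-α} ⟨f, 1_K⟩ 1_K`. -/
def riesz (α : ℝ) (f : ℝ → ℝ) : ℝ → ℝ := fun x =>
  ∑' q : ℤ × ℤ, ((2 : ℝ) ^ q.1) ^ (-α) * (∫ y in dyadicI q.1 q.2, f y) *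
    Set.indicator (dyadicI q.1 q.2) 1 x

/-- The constant `c_α = ∑_{n=1}^∞ 2^{-n(1-α)}`. -/
def cst (α : ℝ) : ℝ := ∑' n : ℕ, (2 : ℝ) ^ (-((n : ℝ) + 1) * (1 - α))


lemma two_zpow_pos (m : ℤ) : (0:ℝ) < 2 ^ m := by positivity

lemma mem_dyadicI {m i : ℤ} {x : ℝ} :
    x ∈ dyadicI m i ↔ (i:ℝ) * 2 ^ m ≤ x ∧ x < ((i:ℝ)+1) * 2 ^ m := Iff.rfl

lemma mem_dyadicI_iff_floor {m i : ℤ} {x : ℝ} :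
    x ∈ dyadicI m i ↔ ⌊x / 2 ^ m⌋ = i := by
  have h2 : (0:ℝ) < 2 ^ m := two_zpow_pos m
  rw [Int.floor_eq_iff, mem_dyadicI, le_div_iff₀ h2, div_lt_iff₀ h2]

lemma mem_dyadicI_floor (m : ℤ) (x : ℝ) : x ∈ dyadicI m ⌊x / 2 ^ m⌋ :=
  mem_dyadicI_iff_floor.2 rfl

lemma dyadic_nested {m m' i i' : ℤ} (hm : m ≤ m') {x : ℝ}
    (h1 : x ∈ dyadicI m i) (h2 : x ∈ dyadicI m' i') :
    dyadicI m i ⊆ dyadicI m' i' := by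
  have h2m : (0:ℝ) < 2 ^ m := two_zpow_pos m
  have key : ((2:ℝ) ^ ((m' - m).toNat : ℤ)) * 2 ^ m = 2 ^ m' := by
    rw [← zpow_add₀ (two_ne_zero)]
    congr 1; omega
  set c : ℤ := i' * 2 ^ (m' - m).toNat with hc
  set d : ℤ := (i' + 1) * 2 ^ (m' - m).toNat with hd
  have hcR : (c:ℝ) * 2 ^ m = (i':ℝ) * 2 ^ m' := by
    push_cast [hc, ← zpow_natCast (2:ℝ)]; rw [← key]; ring
  have hdR : (d:ℝ) * 2 ^ m = ((i':ℝ)+1) * 2 ^ m' := by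
    push_cast [hd, ← zpow_natCast (2:ℝ)]; rw [← key]; ring
  obtain ⟨ha1, ha2⟩ := h1
  obtain ⟨hb1, hb2⟩ := h2
  have hci : c ≤ i := by
    have : (c:ℝ) * 2 ^ m < ((i:ℝ)+1) * 2 ^ m := by rw [hcR]; linarith
    have := (mul_lt_mul_iff_left₀ h2m).1 this
    exact_mod_cast Int.lt_add_one_iff.1 (by exact_mod_cast this)
  have hid : i + 1 ≤ d := by
    have : (i:ℝ) * 2 ^ m < (d:ℝ) * 2 ^ m := by rw [hdR]; linarith
    have := (mul_lt_mul_iff_left₀ h2m).1 this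
    have : (i:ℤ) < d := by exact_mod_cast this
    omega
  intro y hy
  obtain ⟨hy1, hy2⟩ := hy
  constructor
  · rw [← hcR]
    calc (c:ℝ) * 2 ^ m ≤ (i:ℝ) * 2 ^ m := by
          apply mul_le_mul_of_nonneg_right _ h2m.le; exact_mod_cast hci
      _ ≤ y := hy1
  · rw [← hdR]
    calc y < ((i:ℝ)+1) * 2 ^ m := hy2
      _ ≤ (d:ℝ) * 2 ^ m := by
          apply mul_le_mul_of_nonneg_right _ h2m.le
          have : ((i:ℝ)+1) = ((i+1 : ℤ):ℝ) := by push_cast; ring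
          rw [this]; exact_mod_cast hid

lemma dyadic_disjoint {m i i' : ℤ} (h : i ≠ i') {x : ℝ}
    (h1 : x ∈ dyadicI m i) (h2 : x ∈ dyadicI m i') : False := by
  rw [mem_dyadicI_iff_floor] at h1 h2; exact h (h1 ▸ h2)

lemma halves_union (k j : ℤ) :
    dyadicI (k-1) (2*j) ∪ dyadicI (k-1) (2*j+1) = dyadicI k j := by
  have h2k : (2:ℝ) ^ k = 2 ^ (k-1) * 2 := by
    rw [← zpow_add_one₀ (two_ne_zero : (2:ℝ) ≠ 0)]; congr 1; ring
  have e1 : ((2*j:ℤ):ℝ) * 2^(k-1) = (j:ℝ) * 2^k := by push_cast [h2k]; ring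
  have e2 : (((2*j:ℤ):ℝ)+1) * 2^(k-1) = ((2*j+1:ℤ):ℝ) * 2^(k-1) := by push_cast; ring
  have e3 : (((2*j+1:ℤ):ℝ)+1) * 2^(k-1) = ((j:ℝ)+1) * 2^k := by push_cast [h2k]; ring
  unfold dyadicI
  rw [e1, e2, e3]
  refine Set.Ico_union_Ico_eq_Ico ?_ ?_
  · rw [← e1]; push_cast; nlinarith [two_zpow_pos (k-1)]
  · rw [← e3]; push_cast; nlinarith [two_zpow_pos (k-1)]

lemma haar_zero {k j : ℤ} {y : ℝ} (hy : y ∉ dyadicI k j) : haarFn k j y = 0 := by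
  have h1 : y ∉ dyadicI (k-1) (2*j) := fun hm =>
    hy ((halves_union k j) ▸ Set.mem_union_left _ hm)
  have h2 : y ∉ dyadicI (k-1) (2*j+1) := fun hm =>
    hy ((halves_union k j) ▸ Set.mem_union_right _ hm)
  simp [haarFn, Set.indicator_of_notMem h1, Set.indicator_of_notMem h2]

lemma haar_const_on {k j m : ℤ} (hm : m ≤ k - 1) {x : ℝ} (hx : x ∈ dyadicI k j)
    {y : ℝ} (hy : y ∈ dyadicI m ⌊x / 2 ^ m⌋) : haarFn k j y = haarFn k j x := by
  have hxD : x ∈ dyadicI m ⌊x / 2 ^ m⌋ := mem_dyadicI_floor m x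
  rw [← halves_union k j] at hx
  rcases hx with hx | hx
  · have hsub := dyadic_nested hm hxD hx
    have hyL : y ∈ dyadicI (k-1) (2*j) := hsub hy
    have hyR : y ∉ dyadicI (k-1) (2*j+1) := fun hc => dyadic_disjoint (by omega) hyL hc
    have hxR : x ∉ dyadicI (k-1) (2*j+1) := fun hc => dyadic_disjoint (by omega) hx hc
    simp [haarFn, Set.indicator_of_mem hyL, Set.indicator_of_mem hx,
      Set.indicator_of_notMem hyR, Set.indicator_of_notMem hxR]
  · have hsub := dyadic_nested hm hxD hx
    have hyR : y ∈ dyadicI (k-1) (2*j+1) := hsub hy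
    have hyL : y ∉ dyadicI (k-1) (2*j) := fun hc => dyadic_disjoint (by omega) hyR hc
    have hxL : x ∉ dyadicI (k-1) (2*j) := fun hc => dyadic_disjoint (by omega) hx hc
    simp [haarFn, Set.indicator_of_mem hyR, Set.indicator_of_mem hx,
      Set.indicator_of_notMem hyL, Set.indicator_of_notMem hxL]

lemma measurableSet_dyadicI (k j : ℤ) : MeasurableSet (dyadicI k j) := measurableSet_Ico

lemma volume_dyadicI (k j : ℤ) : volume (dyadicI k j) = ENNReal.ofReal ((2:ℝ) ^ k) := by
  rw [dyadicI, Real.volume_Ico]; congr 1; ring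

lemma integral_haar_superset {k j m i : ℤ} (h : dyadicI k j ⊆ dyadicI m i) :
    ∫ y in dyadicI m i, haarFn k j y = 0 := by
  have hsub1 : dyadicI (k-1) (2*j+1) ⊆ dyadicI m i :=
    fun y hy => h ((halves_union k j) ▸ Set.mem_union_right _ hy)
  have hsub2 : dyadicI (k-1) (2*j) ⊆ dyadicI m i :=
    fun y hy => h ((halves_union k j) ▸ Set.mem_union_left _ hy)
  have hint : ∀ a b : ℤ, IntegrableOn (fun y => Set.indicator (dyadicI a b) (1:ℝ→ℝ) y)
      (dyadicI m i) volume := by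
    intro a b
    apply Integrable.integrableOn
    rw [integrable_indicator_iff (measurableSet_dyadicI a b)]
    exact integrableOn_const (by rw [volume_dyadicI]; exact ofReal_ne_top)
  have key : ∀ a b : ℤ, dyadicI a b ⊆ dyadicI m i →
      ∫ y in dyadicI m i, Set.indicator (dyadicI a b) (1:ℝ→ℝ) y = (2:ℝ) ^ a := by
    intro a b hab
    rw [setIntegral_indicator (measurableSet_dyadicI a b),
      Set.inter_eq_self_of_subset_right hab]
    simp [measureReal_def, volume_dyadicI, ENNReal.toReal_ofReal (two_zpow_pos a).le]
  unfold haarFn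
  rw [integral_const_mul, integral_sub (hint _ _) (hint _ _), key _ _ hsub1, key _ _ hsub2]
  ring

lemma integral_haar_disjoint {k j m i : ℤ} (h : ∀ y ∈ dyadicI m i, y ∉ dyadicI k j) :
    ∫ y in dyadicI m i, haarFn k j y = 0 := by
  rw [setIntegral_congr_fun (measurableSet_dyadicI m i)
    (fun y hy => haar_zero (h y hy) : Set.EqOn (haarFn k j) 0 (dyadicI m i))]
  simp

lemma integral_haar_const {k j m : ℤ} (hm : m ≤ k - 1) {x : ℝ} (hx : x ∈ dyadicI k j) :
    ∫ y in dyadicI m ⌊x / 2 ^ m⌋, haarFn k j y = (2:ℝ) ^ m * haarFn k j x := by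
  rw [setIntegral_congr_fun (measurableSet_dyadicI m _)
    (fun y hy => haar_const_on hm hx hy : Set.EqOn (haarFn k j)
      (fun _ => haarFn k j x) (dyadicI m ⌊x / 2 ^ m⌋))]
  rw [setIntegral_const, measureReal_def, volume_dyadicI, ENNReal.toReal_ofReal (two_zpow_pos m).le,
    smul_eq_mul]

lemma rieszHaar (α : ℝ) (K J : ℤ) (x : ℝ) :
    riesz α (haarFn K J) x = cst α * ((2:ℝ) ^ K) ^ (1 - α) * haarFn K J x := by
  set F : ℤ × ℤ → ℝ := fun q =>
    ((2 : ℝ) ^ q.1) ^ (-α) * (∫ y in dyadicI q.1 q.2, haarFn K J y) *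
      Set.indicator (dyadicI q.1 q.2) 1 x with hF
  have hriesz : riesz α (haarFn K J) x = ∑' q : ℤ × ℤ, F q := rfl
  by_cases hx : x ∈ dyadicI K J
  · set g : ℕ → ℝ := fun n => F (K - 1 - (n : ℤ), ⌊x / 2 ^ (K - 1 - (n : ℤ))⌋) with hg
    have hterm : ∀ n : ℕ,
        g n = (2 : ℝ) ^ (-((n : ℝ) + 1) * (1 - α)) *
          (((2 : ℝ) ^ K) ^ (1 - α) * haarFn K J x) := by
      intro n
      rw [hg]; simp only [hF]
      rw [integral_haar_const (by omega) hx,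
        Set.indicator_of_mem (mem_dyadicI_floor _ x), Pi.one_apply]
      have hrp : ((2:ℝ) ^ (K - 1 - (n:ℤ))) ^ (-α) * ((2:ℝ) ^ (K - 1 - (n:ℤ)))
          = (2:ℝ) ^ (-((n:ℝ) + 1) * (1 - α)) * ((2:ℝ) ^ K) ^ (1 - α) := by
        rw [← Real.rpow_intCast 2 (K - 1 - (n:ℤ)), ← Real.rpow_intCast 2 K,
          ← Real.rpow_mul (by norm_num : (0:ℝ) ≤ 2),
          ← Real.rpow_mul (by norm_num : (0:ℝ) ≤ 2),
          ← Real.rpow_add (by norm_num : (0:ℝ) < 2),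
          ← Real.rpow_add (by norm_num : (0:ℝ) < 2)]
        congr 1; push_cast; ring
      calc ((2:ℝ) ^ (K - 1 - (n:ℤ))) ^ (-α) * ((2:ℝ) ^ (K - 1 - (n:ℤ)) * haarFn K J x) * 1
          = (((2:ℝ) ^ (K - 1 - (n:ℤ))) ^ (-α) * ((2:ℝ) ^ (K - 1 - (n:ℤ)))) * haarFn K J x := by
            ring
        _ = _ := by rw [hrp]; ring
    have hbij : ∑' q : ℤ × ℤ, F q = ∑' n : ℕ, g n := by
      apply tsum_eq_tsum_of_ne_zero_bij
        (i := fun n => ((K - 1 - ((n:ℕ) : ℤ), ⌊x / 2 ^ (K - 1 - ((n:ℕ) : ℤ))⌋) : ℤ × ℤ))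
      · intro a b hab
        have := congrArg Prod.fst hab
        simp only at this
        exact Subtype.ext (by omega)
      · rintro ⟨m, i⟩ hq
        simp only [Function.mem_support, hF] at hq
        have hxm : x ∈ dyadicI m i := by
          by_contra hc
          rw [Set.indicator_of_notMem hc] at hq; simp at hq
        have hmi : i = ⌊x / 2 ^ m⌋ := (mem_dyadicI_iff_floor.1 hxm).symm
        have hmK : m ≤ K - 1 := by
          by_contra hc
          push_neg at hc
          rw [integral_haar_superset (dyadic_nested (by omega) hx hxm)] at hq
          simp at hq
        refine ⟨⟨(K - 1 - m).toNat, ?_⟩, ?_⟩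
        · simp only [Function.mem_support, hg]
          have he : (K - 1 - ((K - 1 - m).toNat : ℤ)) = m := by omega
          rw [he, ← hmi]
          exact hq
        · simp only
          have he : (K - 1 - ((K - 1 - m).toNat : ℤ)) = m := by omega
          rw [he, ← hmi]
      · intro n; rfl
    rw [hriesz, hbij, tsum_congr hterm, tsum_mul_right, cst, mul_assoc]
  · have hzero : ∀ q : ℤ × ℤ, F q = 0 := by
      rintro ⟨m, i⟩
      simp only [hF]
      by_cases hxm : x ∈ dyadicI m i
      · by_cases hd : ∀ y ∈ dyadicI m i, y ∉ dyadicI K J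
        · rw [integral_haar_disjoint hd]; ring
        · push_neg at hd
          obtain ⟨y, hy1, hy2⟩ := hd
          rcases le_total m K with hmk | hkm
          · exact absurd (dyadic_nested hmk hy1 hy2 hxm) hx
          · rw [integral_haar_superset (dyadic_nested hkm hy2 hy1)]; ring
      · rw [Set.indicator_of_notMem hxm]; ring
    rw [hriesz, tsum_congr hzero, tsum_zero, haar_zero hx, mul_zero]


/-- If I is strictly contained in J, then
[M_(h_I), I_α] h_J = c_α h_J(I) (|J|^(1-α) - |I|^(1-α)) h_I,
where h_J(I) = v is the constant value of h_J on I. -/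
theorem stmt8 (α : ℝ) (hα0 : 0 < α) (hα1 : α < 1) (k j k' j' : ℤ)
    (h : dyadicI k j ⊂ dyadicI k' j') (v : ℝ)
    (hv : ∀ x ∈ dyadicI k j, haarFn k' j' x = v) (x : ℝ) :
    haarFn k j x * riesz α (haarFn k' j') x -
        riesz α (fun y => haarFn k j y * haarFn k' j' y) x =
      cst α * v * (((2 : ℝ) ^ k') ^ (1 - α) - ((2 : ℝ) ^ k) ^ (1 - α)) *
        haarFn k j x := by
  have hprod : (fun y => haarFn k j y * haarFn k' j' y) = fun y => v * haarFn k j y := by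
    funext y
    by_cases hy : y ∈ dyadicI k j
    · rw [hv y hy]; ring
    · rw [haar_zero hy]; ring
  have hmul : riesz α (fun y => v * haarFn k j y) x = v * riesz α (haarFn k j) x := by
    unfold riesz
    rw [← tsum_mul_left]
    apply tsum_congr
    intro q
    rw [integral_const_mul]
    ring
  have hxv : haarFn k j x * haarFn k' j' x = v * haarFn k j x := by
    by_cases hx : x ∈ dyadicI k j
    · rw [hv x hx]; ring
    · rw [haar_zero hx]; ring
  rw [hprod, hmul, rieszHaar, rieszHaar]
  linear_combination (cst α * ((2:ℝ) ^ k') ^ (1 - α)) * hxv
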